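/- Let σ denote the substitution of the unit constant 1 for the variable q. For every Lb*₁-formula B not containing q, the formulas σ(τ⁺(B)) and B are equivalent in Lb*₁: both sequents σ(τ⁺(B)) → B and B → σ(τ⁺(B)) are derivable in Lb*₁. -/
import Mathlib


/-! Formulas of the Lambek calculus with brackets (and the unit constant `one`,
which is used only in the calculus Lb*₁). Variables are indexed by `ℕ`. -/
inductive Fm : Type
  | var : ℕ → Fm            -- variables p₁, p₂, …
  | one : Fm                 -- the unit constant 𝟏
  | ldiv : Fm → Fm → Fm      -- `ldiv A B` is A \ B (left division)
  | rdiv : Fm → Fm → Fm      -- `rdiv B A` is B / A (right division)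
  | mul : Fm → Fm → Fm       -- `mul A B` is A · B (product)
  | dia : Fm → Fm            -- ⟨⟩A
  | box : Fm → Fm            -- []⁻¹A

/-- Meta-formulas are lists of items; an item is a formula or a bracketed
meta-formula.  The comma is list append (hence associative with unit `[]`, the
empty meta-formula Λ). -/
inductive Item : Type
  | fm : Fm → Item
  | br : List Item → Item

/-- One-hole contexts Δ(·) in meta-formulas: the hole is a designated
occurrence of a sub-meta-formula, possibly under brackets. -/
inductive Ctx : Type
  | hole : List Item → List Item → Ctx
  | br : List Item → Ctx → List Item → Ctx

/-- Plugging a meta-formula into the hole of a context. -/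
def Ctx.plug : Ctx → List Item → List Item
  | .hole l r, Γ => l ++ Γ ++ r
  | .br l c r, Γ => l ++ Item.br (c.plug Γ) :: r

/-- Derivability in the Lambek calculus with brackets Lb* (no unit rules). -/
inductive LbS : List Item → Fm → Prop
  | ax (p : ℕ) : LbS [.fm (.var p)] (.var p)
  | ldiv_l (Γ : List Item) (Δ : Ctx) (A B C : Fm) :
      LbS Γ A → LbS (Δ.plug [.fm B]) C → LbS (Δ.plug (Γ ++ [.fm (.ldiv A B)])) C
  | ldiv_r (Γ : List Item) (A B : Fm) :
      LbS (.fm A :: Γ) B → LbS Γ (.ldiv A B)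
  | rdiv_l (Γ : List Item) (Δ : Ctx) (A B C : Fm) :
      LbS Γ A → LbS (Δ.plug [.fm B]) C → LbS (Δ.plug (.fm (.rdiv B A) :: Γ)) C
  | rdiv_r (Γ : List Item) (A B : Fm) :
      LbS (Γ ++ [.fm A]) B → LbS Γ (.rdiv B A)
  | mul_l (Δ : Ctx) (A B C : Fm) :
      LbS (Δ.plug [.fm A, .fm B]) C → LbS (Δ.plug [.fm (.mul A B)]) C
  | mul_r (Γ Θ : List Item) (A B : Fm) :
      LbS Γ A → LbS Θ B → LbS (Γ ++ Θ) (.mul A B)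
  | dia_l (Δ : Ctx) (A C : Fm) :
      LbS (Δ.plug [.br [.fm A]]) C → LbS (Δ.plug [.fm (.dia A)]) C
  | dia_r (Γ : List Item) (A : Fm) :
      LbS Γ A → LbS [.br Γ] (.dia A)
  | box_l (Δ : Ctx) (A C : Fm) :
      LbS (Δ.plug [.fm A]) C → LbS (Δ.plug [.br [.fm (.box A)]]) C
  | box_r (Γ : List Item) (A : Fm) :
      LbS [.br Γ] A → LbS Γ (.box A)

/-- Derivability in the Lambek calculus with brackets and the unit, Lb*₁. -/
inductive Lb1 : List Item → Fm → Prop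
  | ax (p : ℕ) : Lb1 [.fm (.var p)] (.var p)
  | ldiv_l (Γ : List Item) (Δ : Ctx) (A B C : Fm) :
      Lb1 Γ A → Lb1 (Δ.plug [.fm B]) C → Lb1 (Δ.plug (Γ ++ [.fm (.ldiv A B)])) C
  | ldiv_r (Γ : List Item) (A B : Fm) :
      Lb1 (.fm A :: Γ) B → Lb1 Γ (.ldiv A B)
  | rdiv_l (Γ : List Item) (Δ : Ctx) (A B C : Fm) :
      Lb1 Γ A → Lb1 (Δ.plug [.fm B]) C → Lb1 (Δ.plug (.fm (.rdiv B A) :: Γ)) C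
  | rdiv_r (Γ : List Item) (A B : Fm) :
      Lb1 (Γ ++ [.fm A]) B → Lb1 Γ (.rdiv B A)
  | mul_l (Δ : Ctx) (A B C : Fm) :
      Lb1 (Δ.plug [.fm A, .fm B]) C → Lb1 (Δ.plug [.fm (.mul A B)]) C
  | mul_r (Γ Θ : List Item) (A B : Fm) :
      Lb1 Γ A → Lb1 Θ B → Lb1 (Γ ++ Θ) (.mul A B)
  | dia_l (Δ : Ctx) (A C : Fm) :
      Lb1 (Δ.plug [.br [.fm A]]) C → Lb1 (Δ.plug [.fm (.dia A)]) C
  | dia_r (Γ : List Item) (A : Fm) :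
      Lb1 Γ A → Lb1 [.br Γ] (.dia A)
  | box_l (Δ : Ctx) (A C : Fm) :
      Lb1 (Δ.plug [.fm A]) C → Lb1 (Δ.plug [.br [.fm (.box A)]]) C
  | box_r (Γ : List Item) (A : Fm) :
      Lb1 [.br Γ] A → Lb1 Γ (.box A)
  | one_l (Δ : Ctx) (C : Fm) :
      Lb1 (Δ.plug []) C → Lb1 (Δ.plug [.fm .one]) C
  | one_r : Lb1 [] .one

/-- `ones n` is the meta-formula 𝟏ⁿ = 𝟏, 𝟏, …, 𝟏 (n times). -/
def ones (n : ℕ) : List Item := List.replicate n (.fm .one)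

/-- Derivability in the modified calculus Lb*₁′: the rule (𝟏→) is removed and
the axioms (→𝟏), (ax) and the rules (→⟨⟩), ([]⁻¹→) are replaced by their
primed versions; all other rules of Lb*₁ are kept intact. -/
inductive Lb1' : List Item → Fm → Prop
  | ax' (k m p : ℕ) :
      Lb1' (ones k ++ .fm (.var p) :: ones m) (.var p)
  | one_r' (k : ℕ) : Lb1' (ones k) .one
  | ldiv_l (Γ : List Item) (Δ : Ctx) (A B C : Fm) :
      Lb1' Γ A → Lb1' (Δ.plug [.fm B]) C → Lb1' (Δ.plug (Γ ++ [.fm (.ldiv A B)])) C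
  | ldiv_r (Γ : List Item) (A B : Fm) :
      Lb1' (.fm A :: Γ) B → Lb1' Γ (.ldiv A B)
  | rdiv_l (Γ : List Item) (Δ : Ctx) (A B C : Fm) :
      Lb1' Γ A → Lb1' (Δ.plug [.fm B]) C → Lb1' (Δ.plug (.fm (.rdiv B A) :: Γ)) C
  | rdiv_r (Γ : List Item) (A B : Fm) :
      Lb1' (Γ ++ [.fm A]) B → Lb1' Γ (.rdiv B A)
  | mul_l (Δ : Ctx) (A B C : Fm) :
      Lb1' (Δ.plug [.fm A, .fm B]) C → Lb1' (Δ.plug [.fm (.mul A B)]) C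
  | mul_r (Γ Θ : List Item) (A B : Fm) :
      Lb1' Γ A → Lb1' Θ B → Lb1' (Γ ++ Θ) (.mul A B)
  | dia_l (Δ : Ctx) (A C : Fm) :
      Lb1' (Δ.plug [.br [.fm A]]) C → Lb1' (Δ.plug [.fm (.dia A)]) C
  | dia_r' (k m : ℕ) (Γ : List Item) (A : Fm) :
      Lb1' Γ (.dia A) → Lb1' (ones k ++ .br Γ :: ones m) (.dia A)
  | box_l' (k m : ℕ) (Δ : Ctx) (B C : Fm) :
      Lb1' (Δ.plug [.fm B]) C →
      Lb1' (Δ.plug [.br (ones k ++ .fm (.box B) :: ones m)]) C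
  | box_r (Γ : List Item) (A : Fm) :
      Lb1' [.br Γ] A → Lb1' Γ (.box A)

/-- The formula q \ q. -/
def qq (q : ℕ) : Fm := .ldiv (.var q) (.var q)

mutual
/-- The translation τ⁺ (for positive occurrences), with distinguished variable q. -/
def tauP (q : ℕ) : Fm → Fm
  | .one => qq q
  | .var p => .mul (.mul (qq q) (.var p)) (qq q)
  | .ldiv A B => .ldiv (tauM q A) (tauP q B)
  | .rdiv B A => .rdiv (tauP q B) (tauP q A)
  | .mul A B => .mul (tauP q A) (tauP q B)
  | .dia A => .mul (.mul (qq q) (.dia (tauP q A))) (qq q)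
  | .box A => .box (tauM q A)
/-- The translation τ⁻ (for negative occurrences), with distinguished variable q. -/
def tauM (q : ℕ) : Fm → Fm
  | .one => qq q
  | .var p => .var p
  | .ldiv A B => .ldiv (tauM q A) (tauM q B)
  | .rdiv B A => .rdiv (tauM q B) (tauP q A)
  | .mul A B => .mul (tauM q A) (tauM q B)
  | .dia A => .dia (tauM q A)
  | .box A => .ldiv (qq q) (.rdiv (.box (tauM q A)) (qq q))
end

mutual
/-- τ⁻ on items of meta-formulas. -/
def tauItem (q : ℕ) : Item → Item
  | .fm A => .fm (tauM q A)
  | .br Γ => .br (tauMeta q Γ)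
/-- τ⁻ on meta-formulas. -/
def tauMeta (q : ℕ) : List Item → List Item
  | [] => []
  | i :: Γ => tauItem q i :: tauMeta q Γ
end

/-- The variable q does not occur in a formula. -/
def Fm.qFree (q : ℕ) : Fm → Prop
  | .var p => p ≠ q
  | .one => True
  | .ldiv A B => A.qFree q ∧ B.qFree q
  | .rdiv B A => B.qFree q ∧ A.qFree q
  | .mul A B => A.qFree q ∧ B.qFree q
  | .dia A => A.qFree q
  | .box A => A.qFree q

mutual
/-- The variable q does not occur in an item. -/
def Item.qFree (q : ℕ) : Item → Prop
  | .fm A => A.qFree q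
  | .br Γ => MetaQFree q Γ
/-- The variable q does not occur in a meta-formula. -/
def MetaQFree (q : ℕ) : List Item → Prop
  | [] => True
  | i :: Γ => i.qFree q ∧ MetaQFree q Γ
end

/-- Substitution of the formula E for the variable q in a formula (the unit
constant is not affected). -/
def Fm.subst (q : ℕ) (E : Fm) : Fm → Fm
  | .var p => if p = q then E else .var p
  | .one => .one
  | .ldiv A B => .ldiv (Fm.subst q E A) (Fm.subst q E B)
  | .rdiv B A => .rdiv (Fm.subst q E B) (Fm.subst q E A)
  | .mul A B => .mul (Fm.subst q E A) (Fm.subst q E B)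
  | .dia A => .dia (Fm.subst q E A)
  | .box A => .box (Fm.subst q E A)

mutual
/-- Substitution of E for the variable q in an item. -/
def Item.subst (q : ℕ) (E : Fm) : Item → Item
  | .fm A => .fm (Fm.subst q E A)
  | .br Γ => .br (Meta.subst q E Γ)
/-- Substitution of E for the variable q in a meta-formula. -/
def Meta.subst (q : ℕ) (E : Fm) : List Item → List Item
  | [] => []
  | i :: Γ => Item.subst q E i :: Meta.subst q E Γ
end

/-- A formula contains no occurrence of the unit constant (i.e. it is an
Lb*-formula). -/
def Fm.unitFree : Fm → Prop
  | .var _ => True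
  | .one => False
  | .ldiv A B => A.unitFree ∧ B.unitFree
  | .rdiv B A => B.unitFree ∧ A.unitFree
  | .mul A B => A.unitFree ∧ B.unitFree
  | .dia A => A.unitFree
  | .box A => A.unitFree

mutual
/-- The yield of an item: erase all brackets. -/
def Item.yield : Item → List Fm
  | .fm A => [A]
  | .br Γ => yieldMeta Γ
/-- The yield of a meta-formula: the list of its formulas, with all brackets erased. -/
def yieldMeta : List Item → List Fm
  | [] => []
  | i :: Γ => i.yield ++ yieldMeta Γ
end

/-- A categorial grammar over the alphabet α: a lexical relation ▷ between
letters and formulas, and a target formula H. -/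
structure Grammar (α : Type) where
  rel : α → Fm → Prop
  target : Fm

/-- The lexical relation of the grammar is finite. -/
def Grammar.Finite {α : Type} (G : Grammar α) : Prop :=
  {p : α × Fm | G.rel p.1 p.2}.Finite

/-- The grammar is an Lb*-grammar: no occurrence of the unit constant. -/
def Grammar.UnitFree {α : Type} (G : Grammar α) : Prop :=
  G.target.unitFree ∧ ∀ a A, G.rel a A → A.unitFree

/-- The variable q does not occur in the grammar. -/
def Grammar.AvoidsVar {α : Type} (q : ℕ) (G : Grammar α) : Prop :=
  G.target.qFree q ∧ ∀ a A, G.rel a A → A.qFree q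

/-- The translated grammar: τ⁻ applied to all formulas in the lexical
relation and τ⁺ to the target formula. -/
def Grammar.translate {α : Type} (q : ℕ) (G : Grammar α) : Grammar α :=
  ⟨fun a A => ∃ B, G.rel a B ∧ A = tauM q B, tauP q G.target⟩

/-- The language t-generated by a grammar, relative to a derivability
relation D: a word a₁…aₙ is t-accepted if aᵢ ▷ Aᵢ for some formulas Aᵢ and
some meta-formula Γ with yield A₁,…,Aₙ is derivably mapped to the target. -/
def tLang {α : Type} (D : List Item → Fm → Prop) (G : Grammar α) : Set (List α) :=
  {w | ∃ As : List Fm, List.Forall₂ G.rel w As ∧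
        ∃ Γ : List Item, D Γ G.target ∧ yieldMeta Γ = As}

/-- The language s-generated by a grammar, relative to a derivability
relation D: a word a₁…aₙ is s-accepted if aᵢ ▷ Aᵢ for some formulas Aᵢ such
that the bracket-free sequent A₁,…,Aₙ → H is derivable. -/
def sLang {α : Type} (D : List Item → Fm → Prop) (G : Grammar α) : Set (List α) :=
  {w | ∃ As : List Fm, List.Forall₂ G.rel w As ∧ D (As.map Item.fm) G.target}

/-- The formula 𝟏\𝟏, the image of q\q under σ. -/
def Uf : Fm := .ldiv .one .one

lemma unit_seq : Lb1 [.fm .one] .one := by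
  simpa [Ctx.plug] using Lb1.one_l (.hole [] []) .one (by simpa [Ctx.plug] using Lb1.one_r)

lemma unit_r : Lb1 [] Uf :=
  Lb1.ldiv_r [] .one .one unit_seq

lemma unit_elim (Δ : Ctx) (C : Fm) (h : Lb1 (Δ.plug []) C) :
    Lb1 (Δ.plug [.fm Uf]) C := by
  simpa [Uf] using Lb1.ldiv_l [] Δ .one .one C Lb1.one_r (Lb1.one_l Δ C h)

lemma elimL (Γ : List Item) (C : Fm) (h : Lb1 Γ C) : Lb1 (.fm Uf :: Γ) C := by
  simpa [Ctx.plug] using unit_elim (.hole [] Γ) C (by simpa [Ctx.plug] using h)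

lemma elimR (Γ : List Item) (C : Fm) (h : Lb1 Γ C) : Lb1 (Γ ++ [.fm Uf]) C := by
  simpa [Ctx.plug] using unit_elim (.hole Γ []) C (by simpa [Ctx.plug] using h)

/-- Wrap a derivable sequent with U on both sides and U·X·U on the right. -/
lemma uxu_r (Γ : List Item) (X : Fm) (h : Lb1 Γ X) :
    Lb1 Γ (.mul (.mul Uf X) Uf) := by
  have h1 : Lb1 ([] ++ Γ) (.mul Uf X) := Lb1.mul_r [] Γ Uf X unit_r h
  simpa using Lb1.mul_r Γ [] (.mul Uf X) Uf (by simpa using h1) unit_r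

/-- Eliminate U·X·U on the left. -/
lemma uxu_l (X C : Fm) (h : Lb1 [.fm X] C) :
    Lb1 [.fm (.mul (.mul Uf X) Uf)] C := by
  have h1 : Lb1 [.fm Uf, .fm X, .fm Uf] C := elimL _ _ (by simpa using elimR [.fm X] C h)
  have h2 : Lb1 ((Ctx.hole [] [.fm Uf]).plug [.fm Uf, .fm X]) C := by simpa [Ctx.plug] using h1
  have h3 := Lb1.mul_l (.hole [] [.fm Uf]) Uf X C h2
  have h4 : Lb1 ((Ctx.hole [] []).plug [.fm (.mul Uf X), .fm Uf]) C := by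
    simpa [Ctx.plug] using h3
  simpa [Ctx.plug] using Lb1.mul_l (.hole [] []) (.mul Uf X) Uf C h4

lemma mul_l1 (A B C : Fm) (h : Lb1 [.fm A, .fm B] C) : Lb1 [.fm (.mul A B)] C := by
  simpa [Ctx.plug] using Lb1.mul_l (.hole [] []) A B C (by simpa [Ctx.plug] using h)

lemma dia_l1 (A C : Fm) (h : Lb1 [.br [.fm A]] C) : Lb1 [.fm (.dia A)] C := by
  simpa [Ctx.plug] using Lb1.dia_l (.hole [] []) A C (by simpa [Ctx.plug] using h)

lemma box_l1 (A C : Fm) (h : Lb1 [.fm A] C) : Lb1 [.br [.fm (.box A)]] C := by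
  simpa [Ctx.plug] using Lb1.box_l (.hole [] []) A C (by simpa [Ctx.plug] using h)

lemma ldiv_l1 (Γ : List Item) (A B C : Fm) (h1 : Lb1 Γ A) (h2 : Lb1 [.fm B] C) :
    Lb1 (Γ ++ [.fm (.ldiv A B)]) C := by
  simpa [Ctx.plug] using
    Lb1.ldiv_l Γ (.hole [] []) A B C h1 (by simpa [Ctx.plug] using h2)

lemma rdiv_l1 (Γ : List Item) (A B C : Fm) (h1 : Lb1 Γ A) (h2 : Lb1 [.fm B] C) :
    Lb1 (.fm (.rdiv B A) :: Γ) C := by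
  simpa [Ctx.plug] using
    Lb1.rdiv_l Γ (.hole [] []) A B C h1 (by simpa [Ctx.plug] using h2)

lemma sigma_tau_master (q : ℕ) (B : Fm) (hB : Fm.qFree q B) :
    Lb1 [.fm (Fm.subst q .one (tauP q B))] B ∧
    Lb1 [.fm B] (Fm.subst q .one (tauP q B)) ∧
    Lb1 [.fm (Fm.subst q .one (tauM q B))] B ∧
    Lb1 [.fm B] (Fm.subst q .one (tauM q B)) := by
  have hqq : Fm.subst q .one (qq q) = Uf := by simp [qq, Fm.subst, Uf]
  induction B with
  | var p =>
    have hp : p ≠ q := hB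
    have hsub : Fm.subst q .one (.var p) = .var p := by simp [Fm.subst, hp]
    refine ⟨?_, ?_, ?_, ?_⟩
    · simp only [tauP, Fm.subst, hqq, if_neg hp]
      exact uxu_l _ _ (Lb1.ax p)
    · simp only [tauP, Fm.subst, hqq, if_neg hp]
      exact uxu_r _ _ (Lb1.ax p)
    · simpa [tauM, hsub] using Lb1.ax p
    · simpa [tauM, hsub] using Lb1.ax p
  | one =>
    have h1 : Lb1 [.fm Uf] Fm.one := by
      simpa [Ctx.plug] using unit_elim (.hole [] []) .one (by simpa [Ctx.plug] using Lb1.one_r)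
    have h2 : Lb1 [.fm Fm.one] Uf := by
      simpa [Ctx.plug] using Lb1.one_l (.hole [] []) Uf (by simpa [Ctx.plug] using unit_r)
    exact ⟨by simpa [tauP, hqq] using h1, by simpa [tauP, hqq] using h2,
      by simpa [tauM, hqq] using h1, by simpa [tauM, hqq] using h2⟩
  | ldiv A B ihA ihB =>
    obtain ⟨hA, hB'⟩ := hB
    obtain ⟨pA1, pA2, mA1, mA2⟩ := ihA hA
    obtain ⟨pB1, pB2, mB1, mB2⟩ := ihB hB'
    refine ⟨?_, ?_, ?_, ?_⟩ <;> simp only [tauP, tauM, Fm.subst]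
    · exact Lb1.ldiv_r _ _ _ (by
        simpa using ldiv_l1 [.fm A] _ _ _ mA2 pB1)
    · exact Lb1.ldiv_r _ _ _ (by
        simpa using ldiv_l1 [.fm (Fm.subst q .one (tauM q A))] _ _ _ mA1 pB2)
    · exact Lb1.ldiv_r _ _ _ (by
        simpa using ldiv_l1 [.fm A] _ _ _ mA2 mB1)
    · exact Lb1.ldiv_r _ _ _ (by
        simpa using ldiv_l1 [.fm (Fm.subst q .one (tauM q A))] _ _ _ mA1 mB2)
  | rdiv B A ihB ihA =>
    obtain ⟨hB', hA⟩ := hB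
    obtain ⟨pA1, pA2, mA1, mA2⟩ := ihA hA
    obtain ⟨pB1, pB2, mB1, mB2⟩ := ihB hB'
    refine ⟨?_, ?_, ?_, ?_⟩ <;> simp only [tauP, tauM, Fm.subst]
    · exact Lb1.rdiv_r _ _ _ (by
        simpa using rdiv_l1 [.fm A] _ _ _ pA2 pB1)
    · exact Lb1.rdiv_r _ _ _ (by
        simpa using rdiv_l1 [.fm (Fm.subst q .one (tauP q A))] _ _ _ pA1 pB2)
    · exact Lb1.rdiv_r _ _ _ (by
        simpa using rdiv_l1 [.fm A] _ _ _ pA2 mB1)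
    · exact Lb1.rdiv_r _ _ _ (by
        simpa using rdiv_l1 [.fm (Fm.subst q .one (tauP q A))] _ _ _ pA1 mB2)
  | mul A B ihA ihB =>
    obtain ⟨hA, hB'⟩ := hB
    obtain ⟨pA1, pA2, mA1, mA2⟩ := ihA hA
    obtain ⟨pB1, pB2, mB1, mB2⟩ := ihB hB'
    refine ⟨?_, ?_, ?_, ?_⟩ <;> simp only [tauP, tauM, Fm.subst]
    · exact mul_l1 _ _ _ (Lb1.mul_r [_] [_] _ _ pA1 pB1)
    · exact mul_l1 _ _ _ (Lb1.mul_r [_] [_] _ _ pA2 pB2)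
    · exact mul_l1 _ _ _ (Lb1.mul_r [_] [_] _ _ mA1 mB1)
    · exact mul_l1 _ _ _ (Lb1.mul_r [_] [_] _ _ mA2 mB2)
  | dia A ihA =>
    obtain ⟨pA1, pA2, mA1, mA2⟩ := ihA hB
    refine ⟨?_, ?_, ?_, ?_⟩ <;> simp only [tauP, tauM, Fm.subst, hqq]
    · exact uxu_l _ _ (dia_l1 _ _ (Lb1.dia_r _ _ pA1))
    · exact uxu_r _ _ (dia_l1 _ _ (Lb1.dia_r _ _ pA2))
    · exact dia_l1 _ _ (Lb1.dia_r _ _ mA1)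
    · exact dia_l1 _ _ (Lb1.dia_r _ _ mA2)
  | box A ihA =>
    obtain ⟨pA1, pA2, mA1, mA2⟩ := ihA hB
    refine ⟨?_, ?_, ?_, ?_⟩ <;> simp only [tauP, tauM, Fm.subst, hqq]
    · exact Lb1.box_r _ _ (box_l1 _ _ mA1)
    · exact Lb1.box_r _ _ (box_l1 _ _ mA2)
    · -- [U \ (box τ⁻A / U)] → box A
      apply Lb1.box_r
      set X := Fm.subst q .one (tauM q A) with hX
      have hbox : Lb1 [.br [.fm (.box X)]] A := box_l1 _ _ mA1
      have hr : Lb1 ((Ctx.br [] (.hole [] []) []).plug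
          (.fm (.rdiv (.box X) Uf) :: [])) A := by
        refine Lb1.rdiv_l [] (.br [] (.hole [] []) []) Uf (.box X) A unit_r ?_
        simpa [Ctx.plug] using hbox
      have hl := Lb1.ldiv_l [] (.br [] (.hole [] []) []) Uf (.rdiv (.box X) Uf) A
        unit_r (by simpa [Ctx.plug] using hr)
      simpa [Ctx.plug] using hl
    · -- [box A] → U \ (box τ⁻A / U)
      apply Lb1.ldiv_r
      apply Lb1.rdiv_r
      have hbox : Lb1 [.fm (.box A)] (.box (Fm.subst q .one (tauM q A))) :=
        Lb1.box_r _ _ (box_l1 _ _ mA2)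
      have h1 := elimR [.fm (.box A)] _ hbox
      simpa using elimL _ _ h1

/-- Let σ substitute 𝟏 for the variable q. For every
Lb*₁-formula B not containing q, the formulas σ(τ⁺(B)) and B are equivalent
in Lb*₁. -/
theorem sigma_tauP_equiv (q : ℕ) (B : Fm) (hB : Fm.qFree q B) :
    Lb1 [.fm (Fm.subst q .one (tauP q B))] B ∧
      Lb1 [.fm B] (Fm.subst q .one (tauP q B)) := by
  obtain ⟨h1, h2, -, -⟩ := sigma_tau_master q B hB
  exact ⟨h1, h2⟩
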